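/- Let E be an invertible symmetric m×m real matrix, partitioned with E_{11} scalar (the (1,1) entry) and E_{22} the lower-right (m-1)×(m-1) block, and let E^{11}, E^{12}, E^{22} denote the corresponding blocks of E^{-1}. Let P_2 be the orthogonal projection onto the last m-1 coordinates. Then e_1ᵀ E^{-1} P_2 E^{-1} e_1 / E^{11} = tr(E^{22} - E_{22}^{-1}), provided E^{11} ≠ 0 and E_{22} is invertible. -/

import Mathlib

/-!
Write `F = E⁻¹` and `a = F₁₁`. Reading `E * F = 1` on the last `m` rows gives
`E₂₂ F₂₂ + E₂₁ F₁₂ = 1` and `E₂₂ F₂₁ = -a E₂₁`, so `E₂₂⁻¹ = F₂₂ - F₂₁ F₁₂ / a`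
(the block inversion formula). Hence `tr (F₂₂ - E₂₂⁻¹) = F₁₂ F₂₁ / a`, and
`F₁₂ F₂₁ = (F²)₁₁ - a² = e₁ᵀ F P₂ F e₁`.
-/

open Matrix

namespace Matrix

section CommRing

variable {R : Type*} [CommRing R] {m : ℕ}

theorem submatrix_succ_succ_mul (A B : Matrix (Fin (m + 1)) (Fin (m + 1)) R) :
    (A * B).submatrix Fin.succ Fin.succ =
      A.submatrix Fin.succ Fin.succ * B.submatrix Fin.succ Fin.succ +
        vecMulVec (fun i => A i.succ 0) (fun j => B 0 j.succ) := by
  ext i j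
  simp [mul_apply, Fin.sum_univ_succ, vecMulVec_apply, add_comm]

theorem mul_apply_succ_zero (A B : Matrix (Fin (m + 1)) (Fin (m + 1)) R) :
    (fun i : Fin m => (A * B) i.succ 0) =
      B 0 0 • (fun i => A i.succ 0) + A.submatrix Fin.succ Fin.succ *ᵥ (fun k => B k.succ 0) := by
  ext i
  simp [mul_apply, Fin.sum_univ_succ, mulVec, dotProduct, mul_comm]

theorem mul_one_sub_vecMulVec_single_mul_apply_zero (A B : Matrix (Fin (m + 1)) (Fin (m + 1)) R) :
    (A * (1 - vecMulVec (Pi.single 0 1) (Pi.single 0 1)) * B : Matrix (Fin (m + 1)) _ R) 0 0 =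
      ∑ k : Fin m, A 0 k.succ * B k.succ 0 := by
  rw [mul_sub, mul_one, sub_mul, mul_vecMulVec, vecMulVec_mul, mulVec_single, single_vecMul,
    sub_apply, mul_apply, Fin.sum_univ_succ]
  simp [vecMulVec_apply]

end CommRing

theorem inv_submatrix_succ_succ {K : Type*} [Field K] {m : ℕ}
    {E F : Matrix (Fin (m + 1)) (Fin (m + 1)) K} (hEF : E * F = 1) (hF : F 0 0 ≠ 0) :
    (E.submatrix Fin.succ Fin.succ)⁻¹ =
      F.submatrix Fin.succ Fin.succ -
        (F 0 0)⁻¹ • vecMulVec (fun i => F i.succ 0) (fun j => F 0 j.succ) := by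
  refine inv_eq_right_inv ?_
  have hdiag := submatrix_succ_succ_mul E F
  have hcol := mul_apply_succ_zero E F
  rw [hEF, submatrix_one _ (Fin.succ_injective m)] at hdiag
  rw [hEF] at hcol
  have hEv : E.submatrix Fin.succ Fin.succ *ᵥ (fun k => F k.succ 0) =
      -(F 0 0 • fun i => E i.succ 0) := by
    rw [eq_neg_iff_add_eq_zero, add_comm, ← hcol]
    ext i
    simp
  rw [mul_sub, mul_smul_comm, mul_vecMulVec, hEv, eq_sub_of_add_eq hdiag.symm, neg_vecMulVec,
    smul_vecMulVec, smul_neg, smul_smul, inv_mul_cancel₀ hF, one_smul, sub_neg_eq_add, sub_add_cancel]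

end Matrix

theorem trace_block_identity_general (m : ℕ)
    (E : Matrix (Fin (m + 1)) (Fin (m + 1)) ℝ)
    (hEinv : IsUnit E.det)
    (E22 : Matrix (Fin m) (Fin m) ℝ) (hE22 : E22 = E.submatrix Fin.succ Fin.succ)
    (h11 : E⁻¹ 0 0 ≠ 0)
    (e1 : Fin (m + 1) → ℝ) (he1 : e1 = fun j => if j = 0 then 1 else 0)
    (P2 : Matrix (Fin (m + 1)) (Fin (m + 1)) ℝ) (hP2 : P2 = 1 - vecMulVec e1 e1) :
    (e1 ⬝ᵥ ((E⁻¹ * P2 * E⁻¹) *ᵥ e1)) / (E⁻¹ 0 0) =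
      ((E⁻¹).submatrix Fin.succ Fin.succ - E22⁻¹).trace := by
  obtain rfl : e1 = Pi.single 0 1 := he1.trans (by ext j; simp [Pi.single_apply])
  subst hE22 hP2
  rw [inv_submatrix_succ_succ (mul_nonsing_inv E hEinv) h11, sub_sub_cancel, trace_smul,
    trace_vecMulVec, mulVec_single, single_dotProduct]
  simp only [mul_one_sub_vecMulVec_single_mul_apply_zero, one_mul, MulOpposite.op_one, one_smul,
    col_apply, smul_eq_mul]
  rw [div_eq_inv_mul, dotProduct_comm]
  rfl

/-- for an invertible symmetric E (with E₂₂ invertible and E¹¹ ≠ 0),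
e₁ᵀ E⁻¹ P₂ E⁻¹ e₁ / E¹¹ = tr(E²² - E₂₂⁻¹), where P₂ projects on the last m-1
coordinates and E²² denotes the lower-right block of E⁻¹. -/
theorem trace_block_identity (m : ℕ) (hm : 0 < m)
    (E : Matrix (Fin (m + 1)) (Fin (m + 1)) ℝ)
    (hE : E.IsSymm) (hEinv : IsUnit E.det)
    (E22 : Matrix (Fin m) (Fin m) ℝ) (hE22 : E22 = E.submatrix Fin.succ Fin.succ)
    (hE22inv : IsUnit E22.det)
    (h11 : E⁻¹ 0 0 ≠ 0)
    (e1 : Fin (m + 1) → ℝ) (he1 : e1 = fun j => if j = 0 then 1 else 0)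
    (P2 : Matrix (Fin (m + 1)) (Fin (m + 1)) ℝ) (hP2 : P2 = 1 - vecMulVec e1 e1) :
    (e1 ⬝ᵥ ((E⁻¹ * P2 * E⁻¹) *ᵥ e1)) / (E⁻¹ 0 0) =
      ((E⁻¹).submatrix Fin.succ Fin.succ - E22⁻¹).trace :=
  trace_block_identity_general m E hEinv E22 hE22 h11 e1 he1 P2 hP2
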